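/- For every N ≥ 1, the number of 3-coloured Motzkin paths of length N−1 equals Σ_{k=1}^{N} C(k)·binom(N−1, k−1), where C(k) denotes the k-th Catalan number. -/

import Mathlib

/-!
Let `motzkinCount c h n` count the Motzkin paths with `c` colours of level steps, of length `n`,
from height `h` down to `0`; splitting off the first step gives its defining recurrence.
Deleting the level steps of one colour shows that `motzkinCount (c + 1) h` is the binomial
transform of `motzkinCount c h`. Reading a path with steps `±1` two steps at a time (`UU`, `DD`
as up and down steps, `UD`, `DU` as two level colours) shows
`motzkinCount 2 h n = motzkinCount 0 (2 * h + 1) (2 * n + 1)`, and the latter, for `h = 0`,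
counts the Dyck words of semilength `n + 1`, of which there are `catalan (n + 1)`.
Both identities are checked on the recurrence by induction on `n`.
-/

/-- A step of a 3-coloured Motzkin path: an up-step, a down-step, or a horizontal
step in one of three colours. -/
inductive Step3 : Type
  | up : Step3
  | down : Step3
  | level : Fin 3 → Step3

/-- The value (height change) of a step. -/
def Step3.val : Step3 → ℤ
  | .up => 1
  | .down => -1
  | .level _ => 0

/-- A list of steps is a 3-coloured Motzkin path if every prefix sum of the values
is nonnegative and the total sum is `0`. -/
def IsMotzkin3 (l : List Step3) : Prop :=
  (∀ t : List Step3, t <+: l → 0 ≤ (t.map Step3.val).sum) ∧ (l.map Step3.val).sum = 0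

open Finset

section LatticePaths

variable {α : Type*} (v : α → ℤ)

/-- The walk that starts at height `h` and moves by `v a` at each letter `a` of `l` stays
nonnegative and ends at height `0`. -/
def IsPathFrom (h : ℤ) (l : List α) : Prop :=
  (∀ t, t <+: l → 0 ≤ h + (t.map v).sum) ∧ h + (l.map v).sum = 0

variable {v}

lemma isPathFrom_nil {h : ℤ} : IsPathFrom v h [] ↔ h = 0 := by
  simp only [IsPathFrom, List.prefix_nil, forall_eq, List.map_nil, List.sum_nil, add_zero,
    and_iff_right_iff_imp]
  omega

lemma isPathFrom_cons {h : ℤ} {a : α} {l : List α} :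
    IsPathFrom v h (a :: l) ↔ 0 ≤ h ∧ IsPathFrom v (h + v a) l := by
  simp only [IsPathFrom, List.prefix_cons_iff, forall_eq_or_imp, List.map_nil, List.sum_nil,
    add_zero, List.map_cons, List.sum_cons, ← add_assoc]
  constructor
  · rintro ⟨⟨h0, hpre⟩, hsum⟩
    exact ⟨h0, fun t ht => by simpa [← add_assoc] using hpre _ ⟨t, rfl, ht⟩, hsum⟩
  · rintro ⟨h0, hpre, hsum⟩
    refine ⟨⟨h0, ?_⟩, hsum⟩
    rintro _ ⟨t, rfl, ht⟩
    simpa [← add_assoc] using hpre t ht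

variable (v)

noncomputable def pathCount (h : ℤ) (n : ℕ) : ℕ :=
  Nat.card {l : List α // l.length = n ∧ IsPathFrom v h l}

lemma pathCount_zero (h : ℤ) : pathCount v h 0 = if h = 0 then 1 else 0 := by
  simp only [pathCount, List.length_eq_zero_iff]
  split_ifs with h0
  · rw [Nat.card_eq_one_iff_exists]
    exact ⟨⟨[], rfl, isPathFrom_nil.mpr h0⟩, fun l => Subtype.ext l.2.1⟩
  · rw [Nat.card_eq_zero]
    left
    exact ⟨fun ⟨l, hl, hp⟩ => h0 (isPathFrom_nil.mp (hl ▸ hp))⟩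

def consEquiv (Q : List α → Prop) (n : ℕ) :
    {l : List α // l.length = n + 1 ∧ Q l} ≃ Σ a, {l : List α // l.length = n ∧ Q (a :: l)} where
  toFun
    | ⟨[], hl, _⟩ => absurd hl (by simp)
    | ⟨a :: l, hl, hq⟩ => ⟨a, l, Nat.succ_injective hl, hq⟩
  invFun x := ⟨x.1 :: x.2.1, congrArg Nat.succ x.2.2.1, x.2.2.2⟩
  left_inv := by rintro ⟨_ | ⟨a, l⟩, hl, hq⟩ <;> simp at hl ⊢
  right_inv := by rintro ⟨a, l, hl, hq⟩; rfl

instance finite_length_eq_and [Finite α] (Q : List α → Prop) (n : ℕ) :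
    Finite {l : List α // l.length = n ∧ Q l} :=
  ((List.finite_length_eq α n).subset fun _ hl => hl.1).to_subtype

lemma pathCount_succ [Fintype α] (h : ℤ) (n : ℕ) :
    pathCount v h (n + 1) = if 0 ≤ h then ∑ a, pathCount v (h + v a) n else 0 := by
  rw [pathCount, Nat.card_congr (consEquiv _ n), Nat.card_sigma]
  simp only [isPathFrom_cons]
  split_ifs with h0
  · simp only [h0, true_and]
    rfl
  · simp [h0]

end LatticePaths

def motzkinCount (c : ℕ) : ℤ → ℕ → ℕ
  | h, 0 => if h = 0 then 1 else 0
  | h, n + 1 =>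
    if 0 ≤ h then motzkinCount c (h + 1) n + motzkinCount c (h - 1) n + c * motzkinCount c h n
    else 0

section MotzkinCount

variable {c : ℕ} {h : ℤ}

lemma motzkinCount_of_neg (hh : h < 0) (n : ℕ) : motzkinCount c h n = 0 := by
  cases n <;> simp [motzkinCount, hh.ne, hh.not_ge]

lemma motzkinCount_succ_of_nonneg (hh : 0 ≤ h) (n : ℕ) :
    motzkinCount c h (n + 1) =
      motzkinCount c (h + 1) n + motzkinCount c (h - 1) n + c * motzkinCount c h n := by
  rw [motzkinCount, if_pos hh]

theorem pathCount_eq_motzkinCount {α : Type*} [Fintype α] {v : α → ℤ}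
    (hv : ∀ (f : ℤ → ℕ) (h : ℤ), ∑ a, f (h + v a) = f (h + 1) + f (h - 1) + c * f h)
    (h : ℤ) (n : ℕ) : pathCount v h n = motzkinCount c h n := by
  induction n generalizing h with
  | zero => rw [pathCount_zero, motzkinCount]
  | succ n ih =>
    rw [pathCount_succ, motzkinCount]
    simp only [ih]
    split_ifs
    · exact hv (motzkinCount c · n) h
    · rfl

theorem motzkinCount_succ_eq_sum_choose (c : ℕ) (h : ℤ) (n : ℕ) :
    motzkinCount (c + 1) h n = ∑ j ∈ range (n + 1), n.choose j * motzkinCount c h j := by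
  induction n generalizing h with
  | zero => simp [motzkinCount]
  | succ n ih =>
    rcases lt_or_ge h 0 with hh | hh
    · simp [motzkinCount_of_neg hh]
    have pascal := Finset.sum_choose_succ_mul (R := ℕ) (fun j _ => motzkinCount c h j) n
    simp only [Nat.cast_id] at pascal
    rw [pascal, motzkinCount_succ_of_nonneg hh]
    simp only [motzkinCount_succ_of_nonneg hh, ih, mul_add, sum_add_distrib, mul_left_comm _ c,
      ← mul_sum]
    ring

lemma motzkinCount_zero_add_two (hh : 1 ≤ h) (n : ℕ) :
    motzkinCount 0 h (n + 2) =
      motzkinCount 0 (h + 2) n + 2 * motzkinCount 0 h n + motzkinCount 0 (h - 2) n := by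
  rw [motzkinCount_succ_of_nonneg (by omega), motzkinCount_succ_of_nonneg (by omega),
    motzkinCount_succ_of_nonneg (by omega)]
  simp only [zero_mul, add_zero, add_sub_cancel_right, sub_add_cancel, add_assoc, sub_sub,
    one_add_one_eq_two]
  ring

theorem motzkinCount_two (h : ℤ) (n : ℕ) :
    motzkinCount 2 h n = motzkinCount 0 (2 * h + 1) (2 * n + 1) := by
  induction n generalizing h with
  | zero =>
    simp only [motzkinCount]
    split_ifs <;> omega
  | succ n ih =>
    rcases lt_or_ge h 0 with hh | hh
    · rw [motzkinCount_of_neg hh, motzkinCount_of_neg (by omega)]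
    rw [motzkinCount_succ_of_nonneg hh, ih, ih, ih, show 2 * (n + 1) + 1 = 2 * n + 1 + 2 by ring,
      motzkinCount_zero_add_two (by omega), show 2 * (h + 1) + 1 = 2 * h + 1 + 2 by ring,
      show 2 * (h - 1) + 1 = 2 * h + 1 - 2 by ring]
    ring

end MotzkinCount

section Dyck

open DyckStep

instance : Fintype DyckStep := ⟨{U, D}, fun s => by cases s <;> simp⟩

def DyckStep.val : DyckStep → ℤ
  | U => 1
  | D => -1

lemma DyckStep.sum_val_add (f : ℤ → ℕ) (h : ℤ) :
    ∑ s : DyckStep, f (h + s.val) = f (h + 1) + f (h - 1) + 0 * f h := by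
  show ∑ s ∈ {U, D}, f (h + s.val) = _
  simp [DyckStep.val, sub_eq_add_neg]

lemma DyckStep.sum_map_val (l : List DyckStep) :
    (l.map DyckStep.val).sum = l.count U - l.count D := by
  induction l with
  | nil => simp
  | cons s l ih => cases s <;> simp [DyckStep.val, ih] <;> ring

lemma DyckStep.isPathFrom_val_zero_iff (l : List DyckStep) :
    IsPathFrom DyckStep.val 0 l ↔
      l.count U = l.count D ∧ ∀ i, (l.take i).count D ≤ (l.take i).count U := by
  simp only [IsPathFrom, zero_add, DyckStep.sum_map_val, sub_nonneg, sub_eq_zero, Nat.cast_le,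
    Nat.cast_inj]
  refine and_comm.trans (and_congr_right fun _ => ⟨fun hpre i => hpre _ (l.take_prefix i), ?_⟩)
  intro htake t ht
  rw [List.prefix_iff_eq_take.mp ht]
  exact htake _

def pathEquivDyckWord (m : ℕ) :
    {l : List DyckStep // l.length = 2 * m ∧ IsPathFrom DyckStep.val 0 l} ≃
      {p : DyckWord // p.semilength = m} where
  toFun l :=
    have hl := (DyckStep.isPathFrom_val_zero_iff _).mp l.2.2
    ⟨⟨l.1, hl.1, hl.2⟩, by
      have := DyckWord.two_mul_semilength_eq_length (p := ⟨l.1, hl.1, hl.2⟩)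
      rw [l.2.1] at this
      omega⟩
  invFun p := ⟨p.1.toList, by rw [← p.1.two_mul_semilength_eq_length, p.2],
    (DyckStep.isPathFrom_val_zero_iff _).mpr ⟨p.1.count_U_eq_count_D, p.1.count_D_le_count_U⟩⟩
  left_inv _ := rfl
  right_inv _ := rfl

theorem motzkinCount_zero_zero_two_mul (m : ℕ) : motzkinCount 0 0 (2 * m) = catalan m := by
  rw [← pathCount_eq_motzkinCount DyckStep.sum_val_add, pathCount,
    Nat.card_congr (pathEquivDyckWord m), Nat.card_eq_fintype_card,
    DyckWord.card_dyckWord_semilength_eq_catalan]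

end Dyck

theorem motzkinCount_two_zero (n : ℕ) : motzkinCount 2 0 n = catalan (n + 1) := by
  rw [motzkinCount_two, ← motzkinCount_zero_zero_two_mul, show 2 * (n + 1) = 2 * n + 1 + 1 by ring,
    motzkinCount_succ_of_nonneg le_rfl, zero_sub, motzkinCount_of_neg (h := -1) (by norm_num)]
  simp

namespace Step3

def equivOption : Step3 ≃ Option (Option (Fin 3)) where
  toFun
    | up => none
    | down => some none
    | level i => some (some i)
  invFun
    | none => up
    | some none => down
    | some (some i) => level i
  left_inv s := by cases s <;> rfl
  right_inv o := by rcases o with _ | _ | _ <;> rfl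

instance : Fintype Step3 := Fintype.ofEquiv _ equivOption.symm

lemma sum_val_add (f : ℤ → ℕ) (h : ℤ) :
    ∑ s : Step3, f (h + s.val) = f (h + 1) + f (h - 1) + 3 * f h := by
  rw [← equivOption.symm.sum_comp, Fintype.sum_option, Fintype.sum_option]
  show f (h + 1) + (f (h + -1) + ∑ _i : Fin 3, f (h + 0)) = _
  rw [Fin.sum_const, add_zero, smul_eq_mul, sub_eq_add_neg]
  ring

end Step3

lemma isMotzkin3_iff_isPathFrom (l : List Step3) : IsMotzkin3 l ↔ IsPathFrom Step3.val 0 l := by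
  simp only [IsMotzkin3, IsPathFrom, zero_add]

/-- For `N ≥ 1`, the number of 3-coloured Motzkin paths of length `N - 1` equals
`∑_{k=1}^{N} C(k) · binom(N-1, k-1)`, which counts multi-edge trees of total
multiplicity `N`. -/
theorem card_motzkin3_eq_sum_catalan (N : ℕ) (hN : 1 ≤ N) :
    Nat.card {l : List Step3 // l.length = N - 1 ∧ IsMotzkin3 l} =
      ∑ k ∈ Finset.Icc 1 N, catalan k * Nat.choose (N - 1) (k - 1) := by
  have hpaths : Nat.card {l : List Step3 // l.length = N - 1 ∧ IsMotzkin3 l} =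
      motzkinCount 3 0 (N - 1) := by
    simp only [isMotzkin3_iff_isPathFrom]
    exact pathCount_eq_motzkinCount Step3.sum_val_add 0 (N - 1)
  rw [hpaths, motzkinCount_succ_eq_sum_choose, Nat.sub_add_cancel hN,
    ← Finset.Ico_add_one_right_eq_Icc, sum_Ico_eq_sum_range, Nat.add_sub_cancel]
  refine sum_congr rfl fun j _ => ?_
  rw [motzkinCount_two_zero, add_comm 1 j, Nat.add_sub_cancel, mul_comm]
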